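/- Let 1 ≤ k ≤ n and let S ⊆ {1,…,n} with |S| = k. Define D_S : F₂ⁿ → ℝ by D_S(x) = (k/n)·2^{−(n−k)} + (1 − k/n)·2^{−n} if x_i = 1 for all i ∈ S, and D_S(x) = (1 − k/n)·2^{−n} otherwise. Then D_S is a probability mass function, and its total variation distance to the uniform distribution U(x) = 2^{−n} equals d_TV(D_S, U) = (k/n)·(1 − 2^{−k}). -/

import Mathlib

/-!
`D_S = (1 - k/n) U + (k/n) U_A`, where `U_A` is uniform on the set `A` of the `2^(n-k)` points
that are `1` on `S`. Hence `D_S - U = (k/n) (U_A - U)`, and `d_TV(U_A, U) = 1 - |A|/2^n = 1 - 2^(-k)`.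
-/

/-- The planted bipartite `k`-clique distribution `D_S` on `F₂ⁿ`. -/
noncomputable def bicliqueD (n k : ℕ) (S : Finset (Fin n)) (x : Fin n → ZMod 2) : ℝ :=
  if ∀ i ∈ S, x i = 1 then
    ((k : ℝ) / n) / 2 ^ (n - k) + (1 - (k : ℝ) / n) / 2 ^ n
  else (1 - (k : ℝ) / n) / 2 ^ n

open Finset

theorem card_filter_forall_mem_eq {ι α : Type*} [Fintype ι] [DecidableEq ι] [Fintype α]
    (S : Finset ι) (a : α) [DecidablePred fun x : ι → α => ∀ i ∈ S, x i = a] :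
    #{x : ι → α | ∀ i ∈ S, x i = a} = Fintype.card α ^ (Fintype.card ι - #S) := by
  have : ({x : ι → α | ∀ i ∈ S, x i = a} : Finset _) =
      Fintype.piFinset fun i => if i ∈ S then {a} else univ := by
    ext x
    simp only [mem_filter, mem_univ, true_and, Fintype.mem_piFinset]
    refine forall_congr' fun i => ?_
    split_ifs with h <;> simp [h]
  rw [this, Fintype.card_piFinset]
  simp [apply_ite card, prod_ite, filter_not, card_univ_sdiff]

section UniformOn

variable {X : Type*} [DecidableEq X]

noncomputable def uniformOn (A : Finset X) (x : X) : ℝ := if x ∈ A then (#A : ℝ)⁻¹ else 0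

theorem uniformOn_nonneg (A : Finset X) (x : X) : 0 ≤ uniformOn A x := by
  unfold uniformOn; split_ifs <;> positivity

variable [Fintype X]

theorem sum_uniformOn {A : Finset X} (hA : A.Nonempty) : ∑ x, uniformOn A x = 1 := by
  simp [uniformOn, hA.card_pos.ne']

theorem sum_abs_uniformOn_sub_inv_card {A : Finset X} (hA : A.Nonempty) :
    ∑ x, |uniformOn A x - (Fintype.card X : ℝ)⁻¹| = 2 * (1 - #A / Fintype.card X) := by
  have hA₀ : (0 : ℝ) < #A := by exact_mod_cast hA.card_pos
  have hAX : (#A : ℝ) ≤ Fintype.card X := by exact_mod_cast card_le_univ A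
  have hX : (0 : ℝ) < Fintype.card X := hA₀.trans_le hAX
  have hin : ∀ x ∈ A, |uniformOn A x - (Fintype.card X : ℝ)⁻¹|
      = (#A : ℝ)⁻¹ - (Fintype.card X : ℝ)⁻¹ := fun x hx => by
    rw [uniformOn, if_pos hx, abs_of_nonneg (sub_nonneg.2 (inv_anti₀ hA₀ hAX))]
  have hout : ∀ x ∈ Aᶜ, |uniformOn A x - (Fintype.card X : ℝ)⁻¹|
      = (Fintype.card X : ℝ)⁻¹ := fun x hx => by
    rw [uniformOn, if_neg (mem_compl.1 hx), zero_sub, abs_neg, abs_inv, Nat.abs_cast]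
  rw [← sum_add_sum_compl A, sum_congr rfl hin, sum_congr rfl hout, sum_const, sum_const,
    card_compl, nsmul_eq_mul, nsmul_eq_mul, Nat.cast_sub (card_le_univ A)]
  field_simp
  ring

end UniformOn

theorem card_filter_forall_mem_eq_one_div_two_pow (n : ℕ) (S : Finset (Fin n)) :
    (#{y : Fin n → ZMod 2 | ∀ i ∈ S, y i = 1} : ℝ) / 2 ^ n = ((2 : ℝ) ^ #S)⁻¹ := by
  have hSn : #S ≤ n := card_le_univ S |>.trans_eq (Fintype.card_fin n)
  rw [card_filter_forall_mem_eq, ZMod.card, Fintype.card_fin, Nat.cast_pow, Nat.cast_ofNat,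
    inv_eq_one_div, div_eq_div_iff (by positivity) (by positivity), one_mul, ← pow_add,
    Nat.sub_add_cancel hSn]

theorem bicliqueD_eq_mixture (n : ℕ) (S : Finset (Fin n)) (x : Fin n → ZMod 2) :
    bicliqueD n #S S x = (1 - (#S : ℝ) / n) * ((2 : ℝ) ^ n)⁻¹
      + (#S : ℝ) / n * uniformOn {y | ∀ i ∈ S, y i = 1} x := by
  rw [bicliqueD, uniformOn, card_filter_forall_mem_eq]
  simp only [mem_filter, mem_univ, true_and, ZMod.card, Fintype.card_fin]
  split_ifs <;> push_cast <;> ring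

theorem bicliqueD_tv_to_uniform_general (n k : ℕ)
    (S : Finset (Fin n)) (hS : S.card = k) :
    (∀ x, 0 ≤ bicliqueD n k S x) ∧
    (∑ x : Fin n → ZMod 2, bicliqueD n k S x = 1) ∧
    ((1 / 2) * ∑ x : Fin n → ZMod 2, |bicliqueD n k S x - ((2 : ℝ) ^ n)⁻¹|
      = ((k : ℝ) / n) * (1 - ((2 : ℝ) ^ k)⁻¹)) := by
  subst hS
  have hmix := bicliqueD_eq_mixture n S
  have hAN := card_filter_forall_mem_eq_one_div_two_pow n S
  set A : Finset (Fin n → ZMod 2) := {y | ∀ i ∈ S, y i = 1}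
  have hA : A.Nonempty := ⟨1, by simp [A]⟩
  have hN : (Fintype.card (Fin n → ZMod 2) : ℝ) = 2 ^ n := by simp
  have hp₀ : 0 ≤ (#S : ℝ) / n := by positivity
  have hp₁ : (#S : ℝ) / n ≤ 1 :=
    div_le_one_of_le₀ (by exact_mod_cast card_le_univ S |>.trans_eq (Fintype.card_fin n))
      n.cast_nonneg
  refine ⟨fun x => ?_, ?_, ?_⟩
  · have := uniformOn_nonneg A x
    have := sub_nonneg.2 hp₁
    rw [hmix]
    positivity
  · simp only [hmix, sum_add_distrib, ← mul_sum, sum_uniformOn hA, sum_const, card_univ, hN,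
      nsmul_eq_mul]
    field_simp
    ring
  · have hdev (x) : bicliqueD n #S S x - ((2 : ℝ) ^ n)⁻¹
        = (#S : ℝ) / n * (uniformOn A x - (Fintype.card (Fin n → ZMod 2) : ℝ)⁻¹) := by
      rw [hmix, hN]
      ring
    rw [sum_congr rfl fun x _ => by rw [hdev, abs_mul, abs_of_nonneg hp₀], ← mul_sum,
      sum_abs_uniformOn_sub_inv_card hA, hN, hAN]
    ring

/-- `D_S` is a probability mass function, and its total variation distance to the uniform
distribution on `F₂ⁿ` equals `(k/n)·(1 - 2^{-k})`. -/
theorem bicliqueD_tv_to_uniform (n k : ℕ) (hk : 1 ≤ k) (hkn : k ≤ n)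
    (S : Finset (Fin n)) (hS : S.card = k) :
    (∀ x, 0 ≤ bicliqueD n k S x) ∧
    (∑ x : Fin n → ZMod 2, bicliqueD n k S x = 1) ∧
    ((1 / 2) * ∑ x : Fin n → ZMod 2, |bicliqueD n k S x - ((2 : ℝ) ^ n)⁻¹|
      = ((k : ℝ) / n) * (1 - ((2 : ℝ) ^ k)⁻¹)) :=
  bicliqueD_tv_to_uniform_general n k S hS
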